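/- arXiv:2005.00579 — 2 statements merged into one kernel-verified Lean document; each statement's English description precedes it below -/
import Mathlib

section
/- Let V be a finite free module over a commutative ring R equipped with two descending, separated, exhaustive filtrations Fil₁ and Fil₂ by free direct summands such that rank(Fil₁^ℓ V) = rank(Fil₂^ℓ V) for all ℓ. Then Fil₁ = Fil₂ if and only if the identity map id_V satisfies id_V(Fil₁^ℓ V) ⊆ Fil₂^ℓ V for all ℓ. -/
private lemma aux_eq_of_le_rank {R V : Type*} [CommRing R] [AddCommGroup V] [Module R V]
    (M N : Submodule R V) (h : M ≤ N)
    (hcM : ∃ W : Submodule R V, IsCompl M W)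
    [Module.Free R M] [Module.Free R N] [Module.Finite R M] [Module.Finite R N]
    (hr : Module.rank R M = Module.rank R N) : M = N := by
  rcases subsingleton_or_nontrivial R with hR | hR
  · have : Subsingleton V := Module.subsingleton R V
    apply le_antisymm h
    intro x _
    have : x = 0 := Subsingleton.elim x 0
    simp [this]
  · have hfr : Module.finrank R M = Module.finrank R N := by
      simp [Module.finrank, hr]
    set n := Module.finrank R N with hn
    obtain ⟨W, hW⟩ := hcM
    let bM : Module.Basis (Fin n) R M := by
      refine (Module.finBasis R M).reindex (finCongr ?_)
      simpa [hn] using hfr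
    let bN : Module.Basis (Fin n) R N := Module.finBasis R N
    let f : M →ₗ[R] N := Submodule.inclusion h
    let π : V →ₗ[R] M := Submodule.projectionOnto M W hW
    let g : N →ₗ[R] M := π.comp N.subtype
    have hgf : g.comp f = LinearMap.id := by
      ext x
      simp [g, f, π, Submodule.projectionOnto_apply_left hW ⟨x, x.2⟩]
    have hdet : (LinearMap.toMatrix bN bM g * LinearMap.toMatrix bM bN f).det = 1 := by
      rw [← LinearMap.toMatrix_comp bM bN bM g f, hgf]
      simp
    have hu : IsUnit (LinearMap.toMatrix bM bN f).det := by
      rw [Matrix.det_mul] at hdet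
      exact IsUnit.of_mul_eq_one _ (by rw [mul_comm]; exact hdet)
    have hsurj : Function.Surjective f := by
      have := (LinearEquiv.ofIsUnitDet hu).surjective
      simpa [LinearEquiv.ofIsUnitDet] using this
    apply le_antisymm h
    intro y hy
    obtain ⟨x, hx⟩ := hsurj ⟨y, hy⟩
    have : (x : V) = y := congrArg Subtype.val hx
    exact this ▸ x.2

/-- Two descending, separated, exhaustive filtrations of a finite free module
by free direct summands of equal ranks coincide iff the identity preserves the filtration,
i.e. iff `Fil₁^ℓ V ⊆ Fil₂^ℓ V` for all `ℓ`. -/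
theorem stmt_2 {R V : Type*} [CommRing R] [AddCommGroup V] [Module R V]
    [Module.Free R V] [Module.Finite R V]
    (Fil₁ Fil₂ : ℤ → Submodule R V)
    (hdesc₁ : ∀ ℓ : ℤ, Fil₁ (ℓ + 1) ≤ Fil₁ ℓ)
    (hdesc₂ : ∀ ℓ : ℤ, Fil₂ (ℓ + 1) ≤ Fil₂ ℓ)
    (hsep : ∃ N : ℤ, ∀ ℓ : ℤ, N ≤ ℓ → Fil₁ ℓ = ⊥ ∧ Fil₂ ℓ = ⊥)
    (hexh : ∃ N : ℤ, ∀ ℓ : ℤ, ℓ ≤ N → Fil₁ ℓ = ⊤ ∧ Fil₂ ℓ = ⊤)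
    (hc₁ : ∀ ℓ : ℤ, ∃ W : Submodule R V, IsCompl (Fil₁ ℓ) W)
    (hc₂ : ∀ ℓ : ℤ, ∃ W : Submodule R V, IsCompl (Fil₂ ℓ) W)
    (hfree₁ : ∀ ℓ : ℤ, Module.Free R (Fil₁ ℓ))
    (hfree₂ : ∀ ℓ : ℤ, Module.Free R (Fil₂ ℓ))
    (hfin₁ : ∀ ℓ : ℤ, Module.Finite R (Fil₁ ℓ))
    (hfin₂ : ∀ ℓ : ℤ, Module.Finite R (Fil₂ ℓ))
    (hrank : ∀ ℓ : ℤ, Module.rank R (Fil₁ ℓ) = Module.rank R (Fil₂ ℓ)) :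
    Fil₁ = Fil₂ ↔ ∀ ℓ : ℤ, Fil₁ ℓ ≤ Fil₂ ℓ := by
  constructor
  · intro h ℓ; exact (h ▸ le_refl _)
  · intro h
    funext ℓ
    have := hfree₁ ℓ; have := hfree₂ ℓ; have := hfin₁ ℓ; have := hfin₂ ℓ
    exact aux_eq_of_le_rank _ _ (h ℓ) (hc₁ ℓ) (hrank ℓ)
end

section
/- Let k be a field with an endomorphism σ : k → k (Frobenius on a finite field), let W be a finite-dimensional k-vector space, let L : W → W be a σ-semilinear map, and let Δ ∈ W. If k is replaced by a suitable finite extension (equivalently, assume k separably/algebraically closed with σ = Frobenius when char k = p), the Artin–Schreier-type equation Δ − ε + L(ε) = 0 has a solution ε ∈ W. -/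
open Polynomial Finset

/-- Key lemma: given a relation `L^[m+1] Δ = ∑ c i • L^[i] Δ`, solve the equation. -/
lemma key_as {p : ℕ} [Fact p.Prime] {k : Type*} [Field k] [CharP k p] [IsAlgClosed k]
    {W : Type*} [AddCommGroup W] [Module k W]
    (L : W →ₛₗ[frobenius k p] W) (Δ : W) (m : ℕ) (c : ℕ → k)
    (hrel : L^[m+1] Δ = ∑ i ∈ Finset.range (m+1), c i • L^[i] Δ) :
    ∃ ε : W, Δ - ε + L ε = 0 := by
  classical
  set v : ℕ → W := fun i => L^[i] Δ with hv
  have hv0 : v 0 = Δ := rfl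
  have hvs : ∀ i, v (i+1) = L (v i) := by
    intro i; simp [hv, Function.iterate_succ_apply']
  -- the polynomials
  set P : ℕ → k[X] := fun i =>
    Nat.rec (1 + C (c 0) * X ^ p) (fun j Pj => Pj ^ p + C (c (j+1)) * X ^ p) i with hP
  have hP0 : P 0 = 1 + C (c 0) * X ^ p := rfl
  have hPs : ∀ j, P (j+1) = (P j) ^ p + C (c (j+1)) * X ^ p := fun j => rfl
  have hp0 : (p : k) = 0 := CharP.cast_eq_zero k p
  have hder : ∀ i, derivative (P i) = 0 := by
    intro i
    induction i with
    | zero => simp [hP0, derivative_X_pow, hp0]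
    | succ j ih => simp [hPs, derivative_pow, derivative_X_pow, ih, hp0]
  -- root
  have hQ : (P m - X).degree ≠ 0 := by
    intro h
    have h2 : P m - X = C ((P m - X).coeff 0) := eq_C_of_degree_le_zero h.le
    have h3 : derivative (P m - X) = 0 := by rw [h2]; simp
    rw [derivative_sub, hder, derivative_X, zero_sub, neg_eq_zero] at h3
    exact one_ne_zero h3
  obtain ⟨t₀, ht₀⟩ := IsAlgClosed.exists_root (P m - X) hQ
  have ht : (P m).eval t₀ = t₀ := by
    have := ht₀
    rw [IsRoot, eval_sub, eval_X, sub_eq_zero] at this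
    exact this
  set x : ℕ → k := fun i => (P i).eval t₀ with hx
  have hx0 : x 0 = 1 + c 0 * t₀ ^ p := by simp [hx, hP0]
  have hxs : ∀ j, x (j+1) = x j ^ p + c (j+1) * t₀ ^ p := by
    intro j; simp [hx, hPs]
  have hxm : x m = t₀ := ht
  refine ⟨∑ i ∈ range (m+1), x i • v i, ?_⟩
  have hLε : L (∑ i ∈ range (m+1), x i • v i)
      = ∑ i ∈ range (m+1), x i ^ p • v (i+1) := by
    rw [map_sum]
    refine Finset.sum_congr rfl fun i _ => ?_
    rw [LinearMap.map_smulₛₗ, hvs]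
    rfl
  rw [hLε]
  have h1 : ∑ i ∈ range (m+1), x i ^ p • v (i+1)
      = (∑ i ∈ range m, x i ^ p • v (i+1))
        + ∑ i ∈ range (m+1), (t₀ ^ p * c i) • v i := by
    rw [Finset.sum_range_succ]
    congr 1
    have : v (m+1) = ∑ i ∈ range (m+1), c i • v i := hrel
    rw [this, Finset.smul_sum, hxm]
    refine Finset.sum_congr rfl fun i _ => ?_
    rw [smul_smul]
  have h2 : ∑ i ∈ range (m+1), (t₀ ^ p * c i) • v i
      = (∑ i ∈ range m, (t₀ ^ p * c (i+1)) • v (i+1)) + (t₀ ^ p * c 0) • v 0 :=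
    Finset.sum_range_succ' _ _
  have h3 : ∑ i ∈ range (m+1), x i • v i
      = (∑ i ∈ range m, x (i+1) • v (i+1)) + x 0 • v 0 :=
    Finset.sum_range_succ' _ _
  rw [h1, h2, h3]
  have h4 : (∑ i ∈ range m, x i ^ p • v (i+1))
      + (∑ i ∈ range m, (t₀ ^ p * c (i+1)) • v (i+1))
      = ∑ i ∈ range m, x (i+1) • v (i+1) := by
    rw [← Finset.sum_add_distrib]
    refine Finset.sum_congr rfl fun i _ => ?_
    rw [← add_smul, hxs]
    ring_nf
  have h5 : Δ - (x 0 • v 0) + (t₀ ^ p * c 0) • v 0 = 0 := by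
    rw [hv0, hx0, add_smul, one_smul, mul_comm (c 0), mul_smul]
    abel
  calc Δ - ((∑ i ∈ range m, x (i+1) • v (i+1)) + x 0 • v 0)
        + ((∑ i ∈ range m, x i ^ p • v (i+1))
          + ((∑ i ∈ range m, (t₀ ^ p * c (i+1)) • v (i+1)) + (t₀ ^ p * c 0) • v 0))
      = (Δ - x 0 • v 0 + (t₀ ^ p * c 0) • v 0)
        + (((∑ i ∈ range m, x i ^ p • v (i+1))
            + (∑ i ∈ range m, (t₀ ^ p * c (i+1)) • v (i+1)))
          - ∑ i ∈ range m, x (i+1) • v (i+1)) := by abel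
    _ = 0 := by rw [h4, h5]; abel

/-- (Artin–Schreier type solvability.)  Let `k` be an algebraically closed
field of characteristic `p > 0` with Frobenius `σ = (·^p)`, `W` a finite-dimensional
`k`-vector space, `L : W → W` a `σ`-semilinear map, and `Δ ∈ W`.  Then the
Artin–Schreier-type equation `Δ − ε + L(ε) = 0` has a solution `ε ∈ W`. -/
theorem stmt_18 {p : ℕ} [Fact p.Prime] {k : Type*} [Field k] [CharP k p] [IsAlgClosed k]
    {W : Type*} [AddCommGroup W] [Module k W] [FiniteDimensional k W]
    (L : W →ₛₗ[frobenius k p] W) (Δ : W) :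
    ∃ ε : W, Δ - ε + L ε = 0 := by
  classical
  set d := Module.finrank k W with hd
  -- the family (L^[i] Δ) for i < d+1 is linearly dependent
  have hdep : ¬ LinearIndependent k (fun i : Fin (d+1) => L^[(i : ℕ)] Δ) := by
    intro h
    have := h.fintype_card_le_finrank
    simp only [Fintype.card_fin] at this
    omega
  rw [Fintype.not_linearIndependent_iff] at hdep
  obtain ⟨g, hg, i₀, hi₀⟩ := hdep
  -- extend g to ℕ
  set g' : ℕ → k := fun i => if h : i < d + 1 then g ⟨i, h⟩ else 0 with hg'
  have hsum : ∑ i ∈ range (d+1), g' i • L^[i] Δ = 0 := by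
    rw [← hg, ← Fin.sum_univ_eq_sum_range (fun i => g' i • L^[i] Δ)]
    refine Finset.sum_congr rfl fun i _ => ?_
    simp [hg', i.isLt, Nat.lt_succ_iff.mp i.isLt, not_lt.mpr (Nat.lt_succ_iff.mp i.isLt)]
  -- largest index with nonzero coefficient
  set S : Finset ℕ := (range (d+1)).filter (fun i => g' i ≠ 0) with hS
  have hSne : S.Nonempty := ⟨(i₀ : ℕ), by
    simp only [hS, Finset.mem_filter, Finset.mem_range]
    refine ⟨i₀.isLt, ?_⟩
    simpa [hg', i₀.isLt, Nat.lt_succ_iff.mp i₀.isLt] using hi₀⟩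
  set n := S.max' hSne with hn
  have hnS : n ∈ S := S.max'_mem hSne
  have hnlt : n < d + 1 := (Finset.mem_filter.mp hnS).1 |> Finset.mem_range.mp
  have hgn : g' n ≠ 0 := (Finset.mem_filter.mp hnS).2
  have hmax : ∀ i, n < i → i < d + 1 → g' i = 0 := by
    intro i hni hid
    by_contra hne
    have : i ∈ S := Finset.mem_filter.mpr ⟨Finset.mem_range.mpr hid, hne⟩
    exact absurd (S.le_max' i this) (by omega)
  -- truncate the sum at n
  have hsum2 : ∑ i ∈ range (n+1), g' i • L^[i] Δ = 0 := by
    rw [← hsum]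
    apply Finset.sum_subset
    · intro i hi
      simp only [Finset.mem_range] at hi ⊢
      omega
    · intro i hi1 hi2
      simp only [Finset.mem_range] at hi1 hi2
      rw [hmax i (by omega) (by omega), zero_smul]
  rw [Finset.sum_range_succ] at hsum2
  have hrel : L^[n] Δ = ∑ i ∈ range n, (-(g' i) / g' n) • L^[i] Δ := by
    apply smul_right_injective W hgn
    dsimp only
    rw [Finset.smul_sum]
    have hterm : ∀ i ∈ range n, g' n • ((-(g' i) / g' n) • L^[i] Δ)
        = -(g' i • L^[i] Δ) := by
      intro i _
      rw [smul_smul, ← neg_smul]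
      congr 1
      field_simp
    rw [Finset.sum_congr rfl hterm]
    rw [← sub_eq_zero, Finset.sum_neg_distrib, sub_neg_eq_add, add_comm]
    exact hsum2
  clear hn hnS
  clear_value n
  rcases Nat.eq_zero_or_pos n with hn0 | hn1
  · -- n = 0 : Δ = 0
    subst hn0
    simp only [Finset.range_zero, Finset.sum_empty] at hrel
    refine ⟨0, ?_⟩
    simp [Function.iterate_zero_apply] at hrel
    simp [hrel]
  · obtain ⟨m, rfl⟩ := Nat.exists_eq_succ_of_ne_zero (by omega : n ≠ 0)
    exact key_as L Δ m (fun i => -(g' i) / g' (m + 1)) hrel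
end
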